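/- Let A|B|C be a left depth three tower, E = End A_B, and 𝒥 = End_C A_B. Define A^𝒥 = {x ∈ A : α(x) = α(1)x for all α ∈ 𝒥}. Then A^𝒥 = {x ∈ A : f(yx) = f(y)x for all f ∈ E, y ∈ A}, and the map x ↦ ρ_x (right multiplication) is a ring anti-isomorphism from A^𝒥 onto End_E A, with inverse G ↦ G(1). -/

import Mathlib

open scoped BigOperators

section BTCore

variable {R M N P : Type*} [AddCommGroup M] [AddCommGroup N] [AddCommGroup P]

/-- Relations defining the balanced tensor product of `M` and `N` over the
"scalars" `R`, where `R` acts on the right of `M` via `rho` and on the left of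
`N` via `lam`. -/
inductive BTRel (rho : R → M →+ M) (lam : R → N →+ N) :
    FreeAbelianGroup (M × N) → FreeAbelianGroup (M × N) → Prop
  | addl (m m' : M) (n : N) :
      BTRel rho lam (FreeAbelianGroup.of (m + m', n))
        (FreeAbelianGroup.of (m, n) + FreeAbelianGroup.of (m', n))
  | addr (m : M) (n n' : N) :
      BTRel rho lam (FreeAbelianGroup.of (m, n + n'))
        (FreeAbelianGroup.of (m, n) + FreeAbelianGroup.of (m, n'))
  | bal (r : R) (m : M) (n : N) :
      BTRel rho lam (FreeAbelianGroup.of (rho r m, n))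
        (FreeAbelianGroup.of (m, lam r n))

/-- The balanced tensor product `M ⊗_R N`. -/
def BT (rho : R → M →+ M) (lam : R → N →+ N) : Type _ :=
  (addConGen (BTRel rho lam)).Quotient

namespace BT

variable {rho : R → M →+ M} {lam : R → N →+ N}

instance : AddGroup (BT rho lam) :=
  inferInstanceAs (AddGroup (addConGen (BTRel rho lam)).Quotient)

instance : AddCommGroup (BT rho lam) :=
  { (inferInstanceAs (AddGroup (addConGen (BTRel rho lam)).Quotient) : AddGroup (BT rho lam)) with
    add_comm := fun a b => by
      refine AddCon.induction_on₂ a b fun x y => ?_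
      change ((x + y : FreeAbelianGroup (M × N)) :
        (addConGen (BTRel rho lam)).Quotient) = ((y + x : FreeAbelianGroup (M × N)) : _)
      rw [add_comm] }

/-- The canonical generator `m ⊗ n`. -/
def mk (rho : R → M →+ M) (lam : R → N →+ N) (m : M) (n : N) : BT rho lam :=
  ((FreeAbelianGroup.of (m, n) : FreeAbelianGroup (M × N)) :
    (addConGen (BTRel rho lam)).Quotient)

lemma mk_rel {x y : FreeAbelianGroup (M × N)} (h : BTRel rho lam x y) :
    (x : (addConGen (BTRel rho lam)).Quotient) = (y : _) :=
  (AddCon.eq _).2 (AddConGen.Rel.of _ _ h)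

lemma mk_add_left (m m' : M) (n : N) :
    mk rho lam (m + m') n = mk rho lam m n + mk rho lam m' n := by
  have := mk_rel (BTRel.addl m m' n (rho := rho) (lam := lam))
  exact this

lemma mk_add_right (m : M) (n n' : N) :
    mk rho lam m (n + n') = mk rho lam m n + mk rho lam m n' := by
  have := mk_rel (BTRel.addr m n n' (rho := rho) (lam := lam))
  exact this

lemma mk_bal (r : R) (m : M) (n : N) :
    mk rho lam (rho r m) n = mk rho lam m (lam r n) :=
  mk_rel (BTRel.bal r m n)

/-- Lift a biadditive balanced map to the balanced tensor product. -/
def lift (rho : R → M →+ M) (lam : R → N →+ N) (φ : M → N → P)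
    (h1 : ∀ m m' n, φ (m + m') n = φ m n + φ m' n)
    (h2 : ∀ m n n', φ m (n + n') = φ m n + φ m n')
    (h3 : ∀ r m n, φ (rho r m) n = φ m (lam r n)) : BT rho lam →+ P :=
  AddCon.lift _ (FreeAbelianGroup.lift fun p => φ p.1 p.2)
    (AddCon.addConGen_le.2 (by
      rintro x y h
      cases h with
      | addl m m' n => simp [AddCon.ker_rel, FreeAbelianGroup.lift_apply_of, h1]
      | addr m n n' => simp [AddCon.ker_rel, FreeAbelianGroup.lift_apply_of, h2]
      | bal r m n => simp [AddCon.ker_rel, FreeAbelianGroup.lift_apply_of, h3]))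

@[simp] lemma lift_mk (φ : M → N → P) (h1 h2 h3) (m : M) (n : N) :
    lift rho lam φ h1 h2 h3 (mk rho lam m n) = φ m n := by
  show (addConGen (BTRel rho lam)).lift _ _ ((FreeAbelianGroup.of (m, n) :
    FreeAbelianGroup (M × N)) : (addConGen (BTRel rho lam)).Quotient) = _
  rw [AddCon.lift_coe, FreeAbelianGroup.lift_apply_of]

/-- Induction principle for the balanced tensor product. -/
protected lemma ind {motive : BT rho lam → Prop} (zero : motive 0)
    (mk' : ∀ m n, motive (mk rho lam m n)) (neg : ∀ x, motive x → motive (-x))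
    (add : ∀ x y, motive x → motive y → motive (x + y)) : ∀ x : BT rho lam, motive x := by
  intro x
  refine AddCon.induction_on x fun z => ?_
  induction z using FreeAbelianGroup.induction_on with
  | zero => exact zero
  | of p => exact mk' p.1 p.2
  | neg p h =>
      have : ((-FreeAbelianGroup.of p : FreeAbelianGroup (M × N)) :
          (addConGen (BTRel rho lam)).Quotient) = -(mk rho lam p.1 p.2) := rfl
      rw [this]; exact neg _ (mk' p.1 p.2)
  | add x y hx hy =>
      have : ((x + y : FreeAbelianGroup (M × N)) :
          (addConGen (BTRel rho lam)).Quotient) = (x : _) + (y : _) := rfl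
      rw [this]; exact add _ _ hx hy

lemma hom_ext {f g : BT rho lam →+ P}
    (h : ∀ m n, f (mk rho lam m n) = g (mk rho lam m n)) : f = g := by
  ext x
  refine BT.ind (motive := fun x => f x = g x) ?_ ?_ ?_ ?_ x
  · simp
  · exact h
  · intro y hy; simp [hy]
  · intro y z hy hz; simp [hy, hz]

end BT

end BTCore

section Tensor

variable {B A C P : Type*} [Ring B] [Ring A] [Ring C] [AddCommGroup P]

/-- The tensor product `A ⊗_B A` relative to a ring homomorphism `g : B →+* A`. -/
def Tsr (g : B →+* A) : Type _ :=
  BT (fun b => AddMonoidHom.mulRight (g b)) (fun b => AddMonoidHom.mulLeft (g b))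

instance (g : B →+* A) : AddCommGroup (Tsr g) := inferInstanceAs (AddCommGroup (BT _ _))

namespace Tsr

variable (g : B →+* A)

/-- The generator `x ⊗_B y` of `Tsr g`. -/
def tmk (x y : A) : Tsr g := BT.mk _ _ x y

lemma tmk_add_left (x x' y : A) : tmk g (x + x') y = tmk g x y + tmk g x' y :=
  BT.mk_add_left x x' y

lemma tmk_add_right (x y y' : A) : tmk g x (y + y') = tmk g x y + tmk g x y' :=
  BT.mk_add_right x y y'

lemma tmk_bal (x : A) (b : B) (y : A) : tmk g (x * g b) y = tmk g x (g b * y) :=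
  BT.mk_bal b x y

/-- Lift a biadditive `B`-balanced map `A × A → P` to `Tsr g`. -/
def tlift (φ : A → A → P)
    (h1 : ∀ x x' y, φ (x + x') y = φ x y + φ x' y)
    (h2 : ∀ x y y', φ x (y + y') = φ x y + φ x y')
    (h3 : ∀ x b y, φ (x * g b) y = φ x (g b * y)) : Tsr g →+ P :=
  BT.lift _ _ φ h1 h2 (fun r m n => h3 m r n)

@[simp] lemma tlift_mk (φ : A → A → P) (h1 h2 h3) (x y : A) :
    tlift g φ h1 h2 h3 (tmk g x y) = φ x y :=
  BT.lift_mk φ h1 h2 _ x y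

lemma thom_ext {g : B →+* A} {f f' : Tsr g →+ P}
    (h : ∀ x y, f (tmk g x y) = f' (tmk g x y)) : f = f' :=
  BT.hom_ext h

/-- Left multiplication by `a ∈ A` on the first tensorand. -/
def lmul (a : A) : Tsr g →+ Tsr g :=
  tlift g (fun x y => tmk g (a * x) y)
    (fun x x' y => by rw [mul_add, tmk_add_left])
    (fun x y y' => by rw [tmk_add_right])
    (fun x b y => by rw [← mul_assoc, tmk_bal])

@[simp] lemma lmul_mk (a x y : A) : lmul g a (tmk g x y) = tmk g (a * x) y :=
  tlift_mk g _ _ _ _ x y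

/-- Right multiplication by `a ∈ A` on the second tensorand. -/
def rmul (a : A) : Tsr g →+ Tsr g :=
  tlift g (fun x y => tmk g x (y * a))
    (fun x x' y => by rw [tmk_add_left])
    (fun x y y' => by rw [add_mul, tmk_add_right])
    (fun x b y => by rw [tmk_bal, mul_assoc])

@[simp] lemma rmul_mk (a x y : A) : rmul g a (tmk g x y) = tmk g x (y * a) :=
  tlift_mk g _ _ _ _ x y

lemma lmul_lmul (a a' : A) (p : Tsr g) : lmul g a (lmul g a' p) = lmul g (a * a') p := by
  have : ((lmul g a).comp (lmul g a')) = lmul g (a * a') :=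
    thom_ext fun x y => by simp [mul_assoc]
  exact DFunLike.congr_fun this p

lemma rmul_rmul (a a' : A) (p : Tsr g) : rmul g a (rmul g a' p) = rmul g (a' * a) p := by
  have : ((rmul g a).comp (rmul g a')) = rmul g (a' * a) :=
    thom_ext fun x y => by simp [mul_assoc]
  exact DFunLike.congr_fun this p

lemma lmul_rmul (a a' : A) (p : Tsr g) : lmul g a (rmul g a' p) = rmul g a' (lmul g a p) := by
  have : ((lmul g a).comp (rmul g a')) = (rmul g a').comp (lmul g a) :=
    thom_ext fun x y => by simp
  exact DFunLike.congr_fun this p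

lemma lmul_add_smul (a a' : A) (p : Tsr g) :
    lmul g (a + a') p = lmul g a p + lmul g a' p := by
  have : lmul g (a + a') = lmul g a + lmul g a' :=
    thom_ext fun x y => by simp [add_mul, tmk_add_left]
  rw [this]; rfl

lemma rmul_add_smul (a a' : A) (p : Tsr g) :
    rmul g (a + a') p = rmul g a p + rmul g a' p := by
  have : rmul g (a + a') = rmul g a + rmul g a' :=
    thom_ext fun x y => by simp [mul_add, tmk_add_right]
  rw [this]; rfl

/-- The multiplication map `μ : A ⊗_B A → A`. -/
def mulmap : Tsr g →+ A :=
  tlift g (fun x y => x * y) (fun x x' y => by rw [add_mul])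
    (fun x y y' => by rw [mul_add]) (fun x b y => by rw [mul_assoc])

@[simp] lemma mulmap_mk (x y : A) : mulmap g (tmk g x y) = x * y := tlift_mk g _ _ _ _ x y

end Tsr

section TowerDefs

open Tsr

variable (g : B →+* A) (hC : C →+* A)

/-- `p ∈ (A ⊗_B A)^C` : the `C`-centralizer condition, where `C` maps to `A` via `hC`. -/
def TCent (p : Tsr g) : Prop := ∀ c : C, lmul g (hC c) p = rmul g (hC c) p

/-- `α ∈ End_B A_C` : additive endomorphisms of `A` that are left `B`-linear
(via `g`) and right `C`-linear (via `hC`). -/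
def EndBAC (α : A →+ A) : Prop :=
  (∀ (b : B) (x : A), α (g b * x) = g b * α x) ∧
  ∀ (x : A) (c : C), α (x * hC c) = α x * hC c

/-- The tower is right depth three: `A ⊗_B A` is isomorphic, as `A`-`C`-bimodules,
to a direct summand of `A^n` for some `n`. Here the left `A`-action and right
`C`-action on `A^n` are componentwise, and on `Tsr g` they are `lmul` and `rmul`. -/
def IsRightD3 : Prop :=
  ∃ (n : ℕ) (π : (Fin n → A) →+ Tsr g) (σ : Tsr g →+ (Fin n → A)),
    (∀ (a : A) (v : Fin n → A), π (fun i => a * v i) = lmul g a (π v)) ∧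
    (∀ (c : C) (v : Fin n → A), π (fun i => v i * hC c) = rmul g (hC c) (π v)) ∧
    (∀ (a : A) (p : Tsr g) (i : Fin n), σ (lmul g a p) i = a * σ p i) ∧
    (∀ (c : C) (p : Tsr g) (i : Fin n), σ (rmul g (hC c) p) i = σ p i * hC c) ∧
    (∀ p : Tsr g, π (σ p) = p)

end TowerDefs

end Tensor

open Tsr

/-! Applying `u ⊗ v ↦ F(u) v` to the quasibase identity `z ⊗ 1 = Σ t_j β_j(z)` writes every
`F ∈ End A_B` as `z ↦ Σ a_j β_j(z)` with `β_j ∈ 𝒥`, so `F(x) = F(1) x` whenever `x ∈ A^𝒥`; applied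
to `F ∘ λ_y ∈ End A_B` this gives `F(yx) = F(y) x`. Conversely an `E`-endomorphism `G` commutes
with every `λ_z`, hence `G = ρ_{G 1}`, and `α(G 1) = G(α 1) = α(1) G(1)` puts `G 1` in `A^𝒥`. -/

section Invariants

variable {C B A : Type*} [Ring C] [Ring B] [Ring A]

/-- Membership in `E = End A_B`. -/
def IsRightLinear (g : B →+* A) (F : A →+ A) : Prop :=
  ∀ (z : A) (b : B), F (z * g b) = F z * g b

/-- Membership in `𝒥 = End_C A_B`. -/
def IsBimoduleEnd (k : C →+* A) (g : B →+* A) (α : A →+ A) : Prop :=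
  (∀ (c : C) (z : A), α (k c * z) = k c * α z) ∧ IsRightLinear g α

/-- The invariants `A^𝒥` of `𝒥 = End_C A_B`, with `C` acting on `A` through `k`. -/
def invariants (k : C →+* A) (g : B →+* A) : Set A :=
  {x | ∀ α : A →+ A, IsBimoduleEnd k g α → α x = α 1 * x}

lemma IsRightLinear.comp_mulLeft {g : B →+* A} {F : A →+ A} (hF : IsRightLinear g F) (y : A) :
    IsRightLinear g (F.comp (AddMonoidHom.mulLeft y)) := fun z b => by
  simp only [AddMonoidHom.coe_comp, Function.comp_apply, AddMonoidHom.coe_mulLeft]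
  rw [← mul_assoc, hF]

lemma isRightLinear_mulLeft (g : B →+* A) (y : A) : IsRightLinear g (AddMonoidHom.mulLeft y) :=
  fun z b => mul_assoc y z (g b) |>.symm

lemma one_mem_invariants (k : C →+* A) (g : B →+* A) : (1 : A) ∈ invariants k g :=
  fun _ _ => (mul_one _).symm

lemma AddMonoidHom.mulRight_injective : Function.Injective (AddMonoidHom.mulRight : A → A →+ A) :=
  fun x y h => by simpa using DFunLike.congr_fun h 1

lemma AddMonoidHom.mulRight_mul (x y : A) :
    AddMonoidHom.mulRight (x * y) = (AddMonoidHom.mulRight y).comp (AddMonoidHom.mulRight x) := by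
  ext z
  simp [mul_assoc]

lemma AddMonoidHom.eq_mulRight_apply_one {G : A →+ A} (hG : ∀ z y : A, G (z * y) = z * G y) :
    G = AddMonoidHom.mulRight (G 1) := by
  ext z
  simpa using hG z 1

namespace Tsr

/-- `u ⊗ v ↦ F(u) v`, i.e. `F ⊗ id` followed by the multiplication map. -/
def applyMul (g : B →+* A) {F : A →+ A} (hF : IsRightLinear g F) : Tsr g →+ A :=
  tlift g (fun u v => F u * v) (fun u u' v => by simp [add_mul]) (fun u v v' => by simp [mul_add])
    (fun u b v => by rw [hF, mul_assoc])

@[simp] lemma applyMul_tmk (g : B →+* A) {F : A →+ A} (hF : IsRightLinear g F) (u v : A) :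
    applyMul g hF (tmk g u v) = F u * v :=
  tlift_mk g _ _ _ _ u v

lemma applyMul_rmul (g : B →+* A) {F : A →+ A} (hF : IsRightLinear g F) (a : A) (p : Tsr g) :
    applyMul g hF (rmul g a p) = applyMul g hF p * a := by
  have : (applyMul g hF).comp (rmul g a) = (AddMonoidHom.mulRight a).comp (applyMul g hF) :=
    thom_ext fun x y => by simp [mul_assoc]
  exact DFunLike.congr_fun this p

end Tsr

section Quasibasis

variable {g : B →+* A} {n : ℕ} {β : Fin n → (A →+ A)} {t : Fin n → Tsr g}

lemma apply_eq_sum_mul_quasibasis (hqb : ∀ x y : A, tmk g x y = ∑ j, rmul g (β j x * y) (t j))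
    {F : A →+ A} (hF : IsRightLinear g F) (z : A) :
    F z = ∑ j, applyMul g hF (t j) * β j z := by
  simpa [applyMul_rmul] using congrArg (applyMul g hF) (hqb z 1)

variable {k : C →+* A} (hβ : ∀ j, IsBimoduleEnd k g (β j))
  (hqb : ∀ x y : A, tmk g x y = ∑ j, rmul g (β j x * y) (t j))
include hβ hqb

lemma apply_eq_apply_one_mul_of_mem_invariants {x : A} (hx : x ∈ invariants k g)
    {F : A →+ A} (hF : IsRightLinear g F) : F x = F 1 * x := by
  rw [apply_eq_sum_mul_quasibasis hqb hF x, apply_eq_sum_mul_quasibasis hqb hF 1, Finset.sum_mul]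
  exact Finset.sum_congr rfl fun j _ => by rw [hx (β j) (hβ j), mul_assoc]

lemma apply_mul_of_mem_invariants {x : A} (hx : x ∈ invariants k g)
    {F : A →+ A} (hF : IsRightLinear g F) (y : A) : F (y * x) = F y * x := by
  simpa using apply_eq_apply_one_mul_of_mem_invariants hβ hqb hx (hF.comp_mulLeft y)

lemma invariants_eq_setOf_apply_mul :
    invariants k g = {x | ∀ F : A →+ A, IsRightLinear g F → ∀ y, F (y * x) = F y * x} := by
  ext x
  refine ⟨fun hx F hF y => apply_mul_of_mem_invariants hβ hqb hx hF y, fun hx α hα => ?_⟩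
  simpa using hx α hα.2 1

lemma mul_mem_invariants {x y : A} (hx : x ∈ invariants k g) (hy : y ∈ invariants k g) :
    x * y ∈ invariants k g := fun α hα => by
  rw [apply_mul_of_mem_invariants hβ hqb hy hα.2, hx α hα, mul_assoc]

end Quasibasis

section Bicommutant

variable {g : B →+* A} {G : A →+ A}
  (hG : ∀ F : A →+ A, IsRightLinear g F → ∀ y, G (F y) = F (G y))
include hG

lemma eq_mulRight_apply_one_of_commute : G = AddMonoidHom.mulRight (G 1) :=
  AddMonoidHom.eq_mulRight_apply_one fun z y => hG _ (isRightLinear_mulLeft g z) y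

lemma apply_one_mem_invariants_of_commute (k : C →+* A) : G 1 ∈ invariants k g := fun α hα => by
  have hGρ := eq_mulRight_apply_one_of_commute hG
  rw [← hG α hα.2 1, hGρ, AddMonoidHom.mulRight_apply, ← hGρ]

end Bicommutant

end Invariants

theorem invariants_anti_iso_bicommutant_general {C B A : Type*} [Ring C] [Ring B] [Ring A]
    (f : C →+* B) (g : B →+* A) (n : ℕ) (β : Fin n → (A →+ A)) (t : Fin n → Tsr g)
    (hβ : ∀ j, (∀ (c : C) (x : A), β j ((g.comp f) c * x) = (g.comp f) c * β j x) ∧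
          ∀ (x : A) (b : B), β j (x * g b) = β j x * g b)
    (hqb : ∀ x y : A, tmk g x y = ∑ j, rmul g (β j x * y) (t j)) :
    ({x : A | ∀ α : A →+ A,
        ((∀ (c : C) (z : A), α ((g.comp f) c * z) = (g.comp f) c * α z) ∧
         ∀ (z : A) (b : B), α (z * g b) = α z * g b) → α x = α 1 * x}
      = {x : A | ∀ F : A →+ A, (∀ (z : A) (b : B), F (z * g b) = F z * g b) →
          ∀ y : A, F (y * x) = F y * x}) ∧
    (∀ x ∈ {x : A | ∀ α : A →+ A,
        ((∀ (c : C) (z : A), α ((g.comp f) c * z) = (g.comp f) c * α z) ∧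
         ∀ (z : A) (b : B), α (z * g b) = α z * g b) → α x = α 1 * x},
      ∀ F : A →+ A, (∀ (z : A) (b : B), F (z * g b) = F z * g b) →
        ∀ y : A, AddMonoidHom.mulRight x (F y) = F (AddMonoidHom.mulRight x y)) ∧
    ((1 : A) ∈ {x : A | ∀ α : A →+ A,
        ((∀ (c : C) (z : A), α ((g.comp f) c * z) = (g.comp f) c * α z) ∧
         ∀ (z : A) (b : B), α (z * g b) = α z * g b) → α x = α 1 * x}) ∧
    (∀ x y : A,
      (∀ α : A →+ A,
        ((∀ (c : C) (z : A), α ((g.comp f) c * z) = (g.comp f) c * α z) ∧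
         ∀ (z : A) (b : B), α (z * g b) = α z * g b) → α x = α 1 * x) →
      (∀ α : A →+ A,
        ((∀ (c : C) (z : A), α ((g.comp f) c * z) = (g.comp f) c * α z) ∧
         ∀ (z : A) (b : B), α (z * g b) = α z * g b) → α y = α 1 * y) →
      (∀ α : A →+ A,
        ((∀ (c : C) (z : A), α ((g.comp f) c * z) = (g.comp f) c * α z) ∧
         ∀ (z : A) (b : B), α (z * g b) = α z * g b) → α (x * y) = α 1 * (x * y)) ∧
      AddMonoidHom.mulRight (x * y)
        = (AddMonoidHom.mulRight y).comp (AddMonoidHom.mulRight x)) ∧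
    (Function.Injective fun x : A => AddMonoidHom.mulRight x) ∧
    ∀ G : A →+ A,
      (∀ F : A →+ A, (∀ (z : A) (b : B), F (z * g b) = F z * g b) →
        ∀ y : A, G (F y) = F (G y)) →
      (∀ α : A →+ A,
        ((∀ (c : C) (z : A), α ((g.comp f) c * z) = (g.comp f) c * α z) ∧
         ∀ (z : A) (b : B), α (z * g b) = α z * g b) → α (G 1) = α 1 * G 1) ∧
      G = AddMonoidHom.mulRight (G 1) := by
  refine ⟨invariants_eq_setOf_apply_mul hβ hqb, fun x hx F hF y => ?_, one_mem_invariants _ g,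
    fun x y hx hy => ⟨mul_mem_invariants hβ hqb hx hy, AddMonoidHom.mulRight_mul x y⟩,
    AddMonoidHom.mulRight_injective, fun G hG =>
      ⟨apply_one_mem_invariants_of_commute hG _, eq_mulRight_apply_one_of_commute hG⟩⟩
  exact (apply_mul_of_mem_invariants hβ hqb hx hF y).symm

/-- Let `A|B|C` be a left depth three tower (with left D3
quasibases `β_j ∈ End_C A_B`, `t_j ∈ (A ⊗_B A)^C`), let `E = End A_B` and
`𝒥 = End_C A_B`, and set `A^𝒥 = {x ∈ A : α(x) = α(1) x for all α ∈ 𝒥}`.  Then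
`A^𝒥 = {x : f(yx) = f(y) x for all f ∈ E, y ∈ A}`, and `x ↦ ρ_x` (right
multiplication) is a ring anti-isomorphism of `A^𝒥` onto `End_E A`, with inverse
`G ↦ G 1`. -/
theorem invariants_anti_iso_bicommutant {C B A : Type*} [Ring C] [Ring B] [Ring A]
    (f : C →+* B) (g : B →+* A) (n : ℕ) (β : Fin n → (A →+ A)) (t : Fin n → Tsr g)
    (hβ : ∀ j, (∀ (c : C) (x : A), β j ((g.comp f) c * x) = (g.comp f) c * β j x) ∧
          ∀ (x : A) (b : B), β j (x * g b) = β j x * g b)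
    (ht : ∀ j, TCent g (g.comp f) (t j))
    (hqb : ∀ x y : A, tmk g x y = ∑ j, rmul g (β j x * y) (t j)) :
    ({x : A | ∀ α : A →+ A,
        ((∀ (c : C) (z : A), α ((g.comp f) c * z) = (g.comp f) c * α z) ∧
         ∀ (z : A) (b : B), α (z * g b) = α z * g b) → α x = α 1 * x}
      = {x : A | ∀ F : A →+ A, (∀ (z : A) (b : B), F (z * g b) = F z * g b) →
          ∀ y : A, F (y * x) = F y * x}) ∧
    (∀ x ∈ {x : A | ∀ α : A →+ A,
        ((∀ (c : C) (z : A), α ((g.comp f) c * z) = (g.comp f) c * α z) ∧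
         ∀ (z : A) (b : B), α (z * g b) = α z * g b) → α x = α 1 * x},
      ∀ F : A →+ A, (∀ (z : A) (b : B), F (z * g b) = F z * g b) →
        ∀ y : A, AddMonoidHom.mulRight x (F y) = F (AddMonoidHom.mulRight x y)) ∧
    ((1 : A) ∈ {x : A | ∀ α : A →+ A,
        ((∀ (c : C) (z : A), α ((g.comp f) c * z) = (g.comp f) c * α z) ∧
         ∀ (z : A) (b : B), α (z * g b) = α z * g b) → α x = α 1 * x}) ∧
    (∀ x y : A,
      (∀ α : A →+ A,
        ((∀ (c : C) (z : A), α ((g.comp f) c * z) = (g.comp f) c * α z) ∧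
         ∀ (z : A) (b : B), α (z * g b) = α z * g b) → α x = α 1 * x) →
      (∀ α : A →+ A,
        ((∀ (c : C) (z : A), α ((g.comp f) c * z) = (g.comp f) c * α z) ∧
         ∀ (z : A) (b : B), α (z * g b) = α z * g b) → α y = α 1 * y) →
      (∀ α : A →+ A,
        ((∀ (c : C) (z : A), α ((g.comp f) c * z) = (g.comp f) c * α z) ∧
         ∀ (z : A) (b : B), α (z * g b) = α z * g b) → α (x * y) = α 1 * (x * y)) ∧
      AddMonoidHom.mulRight (x * y)
        = (AddMonoidHom.mulRight y).comp (AddMonoidHom.mulRight x)) ∧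
    (Function.Injective fun x : A => AddMonoidHom.mulRight x) ∧
    ∀ G : A →+ A,
      (∀ F : A →+ A, (∀ (z : A) (b : B), F (z * g b) = F z * g b) →
        ∀ y : A, G (F y) = F (G y)) →
      (∀ α : A →+ A,
        ((∀ (c : C) (z : A), α ((g.comp f) c * z) = (g.comp f) c * α z) ∧
         ∀ (z : A) (b : B), α (z * g b) = α z * g b) → α (G 1) = α 1 * G 1) ∧
      G = AddMonoidHom.mulRight (G 1) :=
  invariants_anti_iso_bicommutant_general f g n β t hβ hqb
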